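/- If A ⊆ ℝ is nanoscopic and B ⊆ ℝ has strong measure zero, then A ∪ B is nanoscopic. -/

import Mathlib

open Set MeasureTheory

/-- `M` can be covered by a sequence of intervals whose `k`-th length is at most `len k`. -/
def IntervalCover (M : Set ℝ) (len : ℕ → ℝ) : Prop :=
  ∃ a b : ℕ → ℝ, M ⊆ ⋃ k, Set.Icc (a k) (b k) ∧ ∀ k, b k - a k ≤ len k

def Microscopic (M : Set ℝ) : Prop :=
  ∀ ε : ℝ, 0 < ε → ε < 1 → IntervalCover M (fun k => ε ^ k)

def Nanoscopic (M : Set ℝ) : Prop :=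
  ∀ ε : ℝ, 0 < ε → ε < 1 → IntervalCover M (fun k => ε ^ (2 ^ k))

def Picoscopic (M : Set ℝ) : Prop :=
  ∀ ε : ℝ, 0 < ε → ε < 1 → IntervalCover M (fun k => ε ^ (Nat.factorial (k + 1)))

def FnMicroscopic (f : ℕ → ℝ → ℝ) (M : Set ℝ) : Prop :=
  ∀ ε : ℝ, 0 < ε → ε < 1 → IntervalCover M (fun k => f k ε)

/-- The standard conditions on a sequence of functions generating generalized microscopic sets. -/
def StandardConditions (f : ℕ → ℝ → ℝ) : Prop :=
  (∀ n, ∀ x ∈ Set.Ioo (0:ℝ) 1, f n x ∈ Set.Ioo (0:ℝ) 1) ∧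
  (∀ n, StrictMonoOn (f n) (Set.Ioo (0:ℝ) 1)) ∧
  (∀ n, ∀ x ∈ Set.Ioo (0:ℝ) 1, f (n + 1) x ≤ f n x) ∧
  (∀ n, Filter.Tendsto (f n) (nhdsWithin 0 (Set.Ioi 0)) (nhds 0)) ∧
  (∃ x₀ : ℝ, 0 < x₀ ∧ ∀ x : ℝ, 0 < x → x < x₀ → Summable fun n => f n x)

def StrongMeasureZero (B : Set ℝ) : Prop :=
  ∀ ε : ℕ → ℝ, (∀ k, 0 < ε k) → IntervalCover B ε

def IsFsigma (F : Set ℝ) : Prop :=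
  ∃ C : ℕ → Set ℝ, (∀ n, IsClosed (C n)) ∧ F = ⋃ n, C n

/-- `A` can be covered by an `Fσ` set which is `(f n)`-microscopic. -/
def MicroStar (f : ℕ → ℝ → ℝ) (A : Set ℝ) : Prop :=
  ∃ F : Set ℝ, IsFsigma F ∧ FnMicroscopic f F ∧ A ⊆ F

/-- `m`-`(f n)`-microscopic sets. -/
def MFnMicroscopic (f : ℕ → ℝ → ℝ) (m : ℕ) (M : Set ℝ) : Prop :=
  ∀ ε : ℝ, 0 < ε → ε < 1 → ∃ a b : ℕ → ℝ, M ⊆ ⋃ k, Set.Icc (a k) (b k) ∧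
    ∀ k : ℕ, ∀ j < m, b (m * k + j) - a (m * k + j) ≤ f k ε

def TwoNanoscopic (M : Set ℝ) : Prop :=
  MFnMicroscopic (fun k ε => ε ^ (2 ^ k)) 2 M

/-! A nanoscopic cover can only be shifted by a bounded number of positions, so the room for a
cover of `B` has to be found otherwise: it suffices to cover `A` within the budgets `ε ^ 2 ^ k`
leaving infinitely many positions free. Take covers of `A` whose `k`-th interval fits the
`(k+1)`-st budget. If one of them accumulates at a point, infinitely many of its intervals fit
into a single interval of length `ε`, and their positions become free. Otherwise all of them are
locally finite, so they also cover the closure of `A`, which is therefore a closed nanoscopic set.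
Its compact pieces `closure A ∩ [-R, R]` need only finitely many intervals, so they can be covered
block after block, leaving a free position after each block. -/

/-- The interval of index `i` occupies position `φ i`; the positions outside `range φ` are free. -/
def IntervalCoverWithGaps (M : Set ℝ) (len : ℕ → ℝ) : Prop :=
  ∃ (ι : Type) (φ : ι → ℕ) (a b : ι → ℝ), Function.Injective φ ∧ (range φ)ᶜ.Infinite ∧
    M ⊆ ⋃ i, Icc (a i) (b i) ∧ ∀ i, b i - a i ≤ len (φ i)

theorem IntervalCover.mono {M M' : Set ℝ} {len len' : ℕ → ℝ} (h : IntervalCover M len)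
    (hM' : M' ⊆ M) (hlen : ∀ k, len k ≤ len' k) : IntervalCover M' len' := by
  obtain ⟨a, b, hcov, hab⟩ := h
  exact ⟨a, b, hM'.trans hcov, fun k => (hab k).trans (hlen k)⟩

theorem IntervalCoverWithGaps.subset {M M' : Set ℝ} {len : ℕ → ℝ}
    (h : IntervalCoverWithGaps M len) (hM' : M' ⊆ M) : IntervalCoverWithGaps M' len := by
  obtain ⟨ι, φ, a, b, hφ, hgaps, hcov, hab⟩ := h
  exact ⟨ι, φ, a, b, hφ, hgaps, hM'.trans hcov, hab⟩

theorem IntervalCoverWithGaps.union_of_strongMeasureZero {A B : Set ℝ} {len : ℕ → ℝ}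
    (hA : IntervalCoverWithGaps A len) (hB : StrongMeasureZero B) (hlen : ∀ k, 0 < len k) :
    IntervalCover (A ∪ B) len := by
  obtain ⟨ι, φ, a, b, hφ, hgaps, hcov, hab⟩ := hA
  set q : ℕ → ℕ := fun j => hgaps.natEmbedding _ j
  have hq : Function.Injective q := Subtype.val_injective.comp (hgaps.natEmbedding _).injective
  have hq_free (j : ℕ) : ¬∃ i, φ i = q j := (hgaps.natEmbedding _ j).2
  obtain ⟨c, d, hcovB, hcd⟩ := hB (fun j => len (q j)) fun j => hlen _
  refine ⟨Function.extend φ a (Function.extend q c 0), Function.extend φ b (Function.extend q d 0),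
    ?_, fun n => ?_⟩
  · rintro x (hx | hx)
    · obtain ⟨i, hi⟩ := mem_iUnion.mp (hcov hx)
      exact mem_iUnion.mpr ⟨φ i, by rwa [hφ.extend_apply, hφ.extend_apply]⟩
    · obtain ⟨j, hj⟩ := mem_iUnion.mp (hcovB hx)
      refine mem_iUnion.mpr ⟨q j, ?_⟩
      rwa [Function.extend_apply' _ _ _ (hq_free j), Function.extend_apply' _ _ _ (hq_free j),
        hq.extend_apply, hq.extend_apply]
  by_cases hn : ∃ i, φ i = n
  · obtain ⟨i, rfl⟩ := hn
    rw [hφ.extend_apply, hφ.extend_apply]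
    exact hab i
  rw [Function.extend_apply' _ _ _ hn, Function.extend_apply' _ _ _ hn]
  by_cases hn' : ∃ j, q j = n
  · obtain ⟨j, rfl⟩ := hn'
    rw [hq.extend_apply, hq.extend_apply]
    exact hcd j
  rw [Function.extend_apply' _ _ _ hn', Function.extend_apply' _ _ _ hn', Pi.zero_apply, sub_zero]
  exact (hlen n).le

theorem exists_infinite_setOf_Icc_subset_of_not_locallyFinite {u v : ℕ → ℝ} {L : ℝ} (hL : 0 < L)
    (hlen : ∀ k, v k - u k ≤ L) (hnlf : ¬LocallyFinite fun k => Icc (u k) (v k)) :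
    ∃ x, {k | Icc (u k) (v k) ⊆ Icc (x - 2 * L) (x + 2 * L)}.Infinite := by
  simp only [LocallyFinite, not_forall, not_exists, not_and, Set.not_finite] at hnlf
  obtain ⟨x, hx⟩ := hnlf
  refine ⟨x, (hx _ (Icc_mem_nhds (by linarith : x - L < x) (by linarith : x < x + L))).mono ?_⟩
  rintro k ⟨y, ⟨hyu, hyv⟩, hyl, hyr⟩ z ⟨hzu, hzv⟩
  have := hlen k
  constructor <;> linarith

theorem IntervalCoverWithGaps.of_infinite_setOf_Icc_subset {M : Set ℝ} {len u v : ℕ → ℝ}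
    {p q : ℝ} (hM : M ⊆ ⋃ k, Icc (u k) (v k)) (hlen : ∀ k, v k - u k ≤ len (k + 1))
    (hpq : q - p ≤ len 0) (hD : {k | Icc (u k) (v k) ⊆ Icc p q}.Infinite) :
    IntervalCoverWithGaps M len := by
  set D := {k | Icc (u k) (v k) ⊆ Icc p q}
  -- all intervals with index in `D` are replaced by `[p, q]` at position `0`
  let φ : Option ↥Dᶜ → ℕ := fun o => o.elim 0 fun k => k + 1
  refine ⟨Option ↥Dᶜ, φ, fun o => o.elim p fun k => u k, fun o => o.elim q fun k => v k,
    ?_, ?_, ?_, ?_⟩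
  · rintro (_ | ⟨i, _⟩) (_ | ⟨j, _⟩) h <;> simp_all [φ]
  · refine (hD.image (f := (· + 1)) fun _ _ _ _ h => Nat.add_right_cancel h).mono ?_
    rintro _ ⟨k, hk, rfl⟩ ⟨(_ | ⟨j, hj⟩), h⟩
    · simp [φ] at h
    · obtain rfl : j = k := Nat.add_right_cancel h
      exact hj hk
  · intro x hx
    obtain ⟨k, hk⟩ := mem_iUnion.mp (hM hx)
    by_cases hkD : k ∈ D
    · exact mem_iUnion.mpr ⟨none, hkD hk⟩
    · exact mem_iUnion.mpr ⟨some ⟨k, hkD⟩, hk⟩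
  · rintro (_ | ⟨k, _⟩)
    exacts [hpq, hlen k]

theorem Nanoscopic.closure_of_forall_locallyFinite {A : Set ℝ} (hA : Nanoscopic A) {δ₀ : ℝ}
    (hδ₀ : 0 < δ₀) (hlf : ∀ u v : ℕ → ℝ, A ⊆ ⋃ k, Icc (u k) (v k) →
      (∀ k, v k - u k ≤ δ₀ ^ 2 ^ k) → LocallyFinite fun k => Icc (u k) (v k)) :
    Nanoscopic (closure A) := by
  intro δ hδ0 hδ1
  obtain ⟨u, v, hcov, hlen⟩ := hA (min δ δ₀) (lt_min hδ0 hδ₀) (min_lt_of_left_lt hδ1)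
  have hle (δ' : ℝ) (h : min δ δ₀ ≤ δ') (k : ℕ) : v k - u k ≤ δ' ^ 2 ^ k :=
    (hlen k).trans (pow_le_pow_left₀ (lt_min hδ0 hδ₀).le h _)
  have hclosed : IsClosed (⋃ k, Icc (u k) (v k)) :=
    (hlf u v hcov (hle δ₀ (min_le_right _ _))).isClosed_iUnion fun _ => isClosed_Icc
  exact ⟨u, v, closure_minimal hcov hclosed, hle δ (min_le_left _ _)⟩

theorem IsCompact.exists_nat_subcover_Icc {K : Set ℝ} (hK : IsCompact K) {a b η : ℕ → ℝ}
    (hη : ∀ k, 0 < η k) (hKab : K ⊆ ⋃ k, Icc (a k) (b k)) :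
    ∃ N, K ⊆ ⋃ k < N, Icc (a k - η k) (b k + η k) := by
  have hopen : K ⊆ ⋃ k, Ioo (a k - η k) (b k + η k) := hKab.trans <| iUnion_mono fun k =>
    Icc_subset_Ioo (by linarith [hη k]) (by linarith [hη k])
  obtain ⟨t, ht⟩ := hK.elim_finite_subcover _ (fun _ => isOpen_Ioo) hopen
  obtain ⟨N, hN⟩ := t.exists_nat_subset_range
  refine ⟨N, ht.trans <| iUnion₂_mono' fun k hk => ⟨k, ?_, Ioo_subset_Icc_self⟩⟩
  simpa using hN hk

theorem IsCompact.exists_shifted_cover_of_nanoscopic {K : Set ℝ} (hK : IsCompact K)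
    (hN : Nanoscopic K) {e : ℝ} (he0 : 0 < e) (he : e ≤ 1 / 2) (s : ℕ) :
    ∃ (N : ℕ) (a b : ℕ → ℝ), K ⊆ ⋃ i < N, Icc (a i) (b i) ∧
      ∀ i < N, b i - a i ≤ e ^ 2 ^ (s + i) := by
  have he1 : e < 1 := by linarith
  set δ := e ^ 2 ^ (s + 1)
  obtain ⟨u, v, hcov, hlen⟩ :=
    hN δ (pow_pos he0 _) (pow_lt_one₀ he0.le he1 (pow_ne_zero _ two_ne_zero))
  obtain ⟨N, hKN⟩ := hK.exists_nat_subcover_Icc (η := fun k => δ ^ 2 ^ k / 2)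
    (fun k => half_pos (pow_pos (pow_pos he0 _) _)) hcov
  refine ⟨N, _, _, hKN, fun i _ => ?_⟩
  -- the budget for `δ` at `i` is the square of the budget for `e` at `s + i`, and `2 y ^ 2 ≤ y`
  have hsq : δ ^ 2 ^ i = (e ^ 2 ^ (s + i)) ^ 2 := by
    rw [← pow_mul, ← pow_mul, ← pow_add, ← pow_succ]
    ring_nf
  have hy0 : 0 ≤ e ^ 2 ^ (s + i) := by positivity
  have hy : e ^ 2 ^ (s + i) ≤ 1 / 2 :=
    (pow_le_of_le_one he0.le he1.le (pow_ne_zero _ two_ne_zero)).trans he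
  nlinarith [hlen i]

theorem IntervalCoverWithGaps.iUnion_of_blocks {K : ℕ → Set ℝ} {len : ℕ → ℝ}
    (hK : ∀ R s, ∃ (N : ℕ) (a b : ℕ → ℝ), K R ⊆ ⋃ i < N, Icc (a i) (b i) ∧
      ∀ i < N, b i - a i ≤ len (s + i)) :
    IntervalCoverWithGaps (⋃ R, K R) len := by
  choose N a b hcov hlen using hK
  -- block `R` occupies the positions `s R, …, s R + N R (s R) - 1`, followed by one free position
  let s : ℕ → ℕ := fun R => Nat.rec 0 (fun R t => t + N R t + 1) R
  have hs_succ (R : ℕ) : s (R + 1) = s R + N R (s R) + 1 := rfl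
  have hsep {R R' : ℕ} (h : R < R') : s R + N R (s R) < s R' := by
    induction h with
    | refl => rw [hs_succ]; omega
    | step _ ih => rw [hs_succ]; omega
  refine ⟨Σ R, Fin (N R (s R)), fun p => s p.1 + p.2, fun p => a p.1 (s p.1) p.2,
    fun p => b p.1 (s p.1) p.2, ?_, ?_, ?_, fun p => hlen p.1 (s p.1) p.2 p.2.2⟩
  · rintro ⟨R, i, hi⟩ ⟨R', i', hi'⟩ h
    simp only at h
    rcases lt_trichotomy R R' with hR | rfl | hR
    · have := hsep hR; omega
    · simp only [Sigma.mk.injEq, heq_eq_eq, Fin.mk.injEq, true_and]; omega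
    · have := hsep hR; omega
  · have hgap_mono : StrictMono fun R => s R + N R (s R) := fun R R' h =>
      (hsep h).trans_le (Nat.le_add_right _ _)
    refine (infinite_range_of_injective hgap_mono.injective).mono ?_
    rintro _ ⟨R, rfl⟩ ⟨⟨R', i', hi'⟩, h⟩
    simp only at h
    rcases lt_trichotomy R R' with hR | rfl | hR
    · have := hsep hR; omega
    · omega
    · have := hsep hR; omega
  · intro x hx
    obtain ⟨R, hxR⟩ := mem_iUnion.mp hx
    obtain ⟨i, hi, hxi⟩ := mem_iUnion₂.mp (hcov R (s R) hxR)
    exact mem_iUnion.mpr ⟨⟨R, i, hi⟩, hxi⟩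

theorem IsClosed.intervalCoverWithGaps_of_nanoscopic {C : Set ℝ} (hC : IsClosed C)
    (hN : Nanoscopic C) {e : ℝ} (he0 : 0 < e) (he : e ≤ 1 / 2) :
    IntervalCoverWithGaps C fun k => e ^ 2 ^ k := by
  have hpieces : C ⊆ ⋃ R : ℕ, C ∩ Metric.closedBall 0 R := by
    rw [← inter_iUnion, Metric.iUnion_closedBall_nat, inter_univ]
  refine (IntervalCoverWithGaps.iUnion_of_blocks fun R s => ?_).subset hpieces
  exact ((isCompact_closedBall 0 R).inter_left hC).exists_shifted_cover_of_nanoscopic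
    (fun ε h0 h1 => (hN ε h0 h1).mono inter_subset_left fun _ => le_rfl) he0 he s

theorem stmt8 (A B : Set ℝ) (hA : Nanoscopic A) (hB : StrongMeasureZero B) :
    Nanoscopic (A ∪ B) := by
  intro ε hε0 hε1
  set e := min ε (1 / 4)
  have he0 : 0 < e := lt_min hε0 (by norm_num)
  have he : e ≤ 1 / 4 := min_le_right _ _
  refine (IntervalCoverWithGaps.union_of_strongMeasureZero ?_ hB fun k => pow_pos he0 _).mono
    subset_rfl fun k => pow_le_pow_left₀ he0.le (min_le_left _ _) _
  have hsq (k : ℕ) : (e ^ 2) ^ 2 ^ k = e ^ 2 ^ (k + 1) := by rw [← pow_mul, pow_succ']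
  by_cases hacc : ∃ u v : ℕ → ℝ, A ⊆ ⋃ k, Icc (u k) (v k) ∧
      (∀ k, v k - u k ≤ (e ^ 2) ^ 2 ^ k) ∧ ¬LocallyFinite fun k => Icc (u k) (v k)
  · obtain ⟨u, v, hcov, hlen, hnlf⟩ := hacc
    have hlen_sq (k : ℕ) : v k - u k ≤ e ^ 2 := (hlen k).trans
      (pow_le_of_le_one (by positivity) (by nlinarith) (pow_ne_zero _ two_ne_zero))
    obtain ⟨x, hx⟩ := exists_infinite_setOf_Icc_subset_of_not_locallyFinite (by positivity)
      hlen_sq hnlf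
    exact .of_infinite_setOf_Icc_subset hcov (fun k => hsq k ▸ hlen k) (by norm_num; nlinarith) hx
  · push Not at hacc
    exact (isClosed_closure.intervalCoverWithGaps_of_nanoscopic
      (hA.closure_of_forall_locallyFinite (by positivity) hacc) he0 (by linarith)).subset
      subset_closure
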